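/- arXiv:2209.01052 — 2 statements merged into one kernel-verified Lean document; each statement's English description precedes it below -/
import Mathlib

section
/- Let C be a finite nonempty index set, n a positive natural number, and for each t ∈ C let S_t ⊆ {σ : Fin n → ℝ | σ ≥ 0} be a nonempty set (the feasible uncertainties for object t) that is upward closed: σ ∈ S_t and σ' ≥ σ implies σ' ∈ S_t. For each t, let σ^t be a minimizer of the Euclidean norm over S_t, define σ̂_i = max_t σ^t_i, and let P = inf { ‖σ‖ : σ ∈ ⋂_t S_t }. Then (1/√n) · ‖σ̂‖ ≤ P ≤ ‖σ̂‖. -/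
/-!
The componentwise maximum `σ̂` of the minimizers lies in every `S t` by upward closure, which
gives the upper bound. For the lower bound, each coordinate of `σ̂` is a coordinate of some
minimizer `σ^t`, hence bounded by `‖σ^t‖ ≤ ‖σ‖` for any `σ` in the intersection; a vector whose
`n` coordinates are all bounded by `M` has norm at most `√n · M`.
-/

/-- The Euclidean norm of a vector in `ℝ^n`. -/
noncomputable def e2norm {n : ℕ} (σ : Fin n → ℝ) : ℝ := Real.sqrt (∑ i, σ i ^ 2)

lemma e2norm_nonneg {n : ℕ} (σ : Fin n → ℝ) : 0 ≤ e2norm σ :=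
  Real.sqrt_nonneg _

lemma abs_le_e2norm {n : ℕ} (σ : Fin n → ℝ) (i : Fin n) : |σ i| ≤ e2norm σ := by
  rw [e2norm, ← Real.sqrt_sq_eq_abs]
  exact Real.sqrt_le_sqrt (Finset.single_le_sum (fun j _ => sq_nonneg (σ j)) (Finset.mem_univ i))

lemma e2norm_le_sqrt_mul_of_abs_le {n : ℕ} {σ : Fin n → ℝ} {M : ℝ} (hM : 0 ≤ M)
    (h : ∀ i, |σ i| ≤ M) : e2norm σ ≤ Real.sqrt n * M := by
  have hsq : ∀ i, σ i ^ 2 ≤ M ^ 2 := fun i => by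
    simpa only [sq_abs] using pow_le_pow_left₀ (abs_nonneg (σ i)) (h i) 2
  calc e2norm σ ≤ Real.sqrt (∑ _i : Fin n, M ^ 2) :=
        Real.sqrt_le_sqrt (Finset.sum_le_sum fun i _ => hsq i)
    _ = Real.sqrt n * M := by
        rw [Finset.sum_const, Finset.card_univ, Fintype.card_fin, nsmul_eq_mul,
          Real.sqrt_mul (Nat.cast_nonneg n), Real.sqrt_sq hM]

theorem proximity_bounds_general {ι : Type*} {n : ℕ} (hn : 0 < n)
    (C : Finset ι) (hC : C.Nonempty)
    (S : ι → Set (Fin n → ℝ))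
    (hup : ∀ t ∈ C, ∀ σ ∈ S t, ∀ σ' : Fin n → ℝ, σ ≤ σ' → σ' ∈ S t)
    (σm : ι → Fin n → ℝ)
    (hmem : ∀ t ∈ C, σm t ∈ S t)
    (hmin : ∀ t ∈ C, ∀ σ ∈ S t, e2norm (σm t) ≤ e2norm σ) :
    (1 / Real.sqrt n) * e2norm (fun i => C.sup' hC fun t => σm t i) ≤
        sInf {r : ℝ | ∃ σ : Fin n → ℝ, (∀ t ∈ C, σ ∈ S t) ∧ r = e2norm σ} ∧
      sInf {r : ℝ | ∃ σ : Fin n → ℝ, (∀ t ∈ C, σ ∈ S t) ∧ r = e2norm σ} ≤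
        e2norm (fun i => C.sup' hC fun t => σm t i) := by
  set σh : Fin n → ℝ := fun i => C.sup' hC fun t => σm t i
  have hσh_mem : ∀ t ∈ C, σh ∈ S t := fun t ht =>
    hup t ht _ (hmem t ht) _ fun i => Finset.le_sup' (fun t => σm t i) ht
  have hσh_le : ∀ σ, (∀ t ∈ C, σ ∈ S t) → e2norm σh ≤ Real.sqrt n * e2norm σ := by
    intro σ hσ
    refine e2norm_le_sqrt_mul_of_abs_le (e2norm_nonneg σ) fun i => ?_
    obtain ⟨t, ht, hti⟩ := Finset.exists_mem_eq_sup' hC fun t => σm t i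
    calc |σh i| = |σm t i| := congrArg abs hti
      _ ≤ e2norm (σm t) := abs_le_e2norm _ _
      _ ≤ e2norm σ := hmin t ht σ (hσ t ht)
  constructor
  · refine le_csInf ⟨_, σh, hσh_mem, rfl⟩ ?_
    rintro _ ⟨σ, hσ, rfl⟩
    rw [one_div, inv_mul_le_iff₀ (Real.sqrt_pos.mpr (Nat.cast_pos.mpr hn))]
    exact hσh_le σ hσ
  · refine csInf_le ⟨0, ?_⟩ ⟨σh, hσh_mem, rfl⟩
    rintro _ ⟨σ, -, rfl⟩
    exact e2norm_nonneg σ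

/-- Theorem 2 of the paper, abstractly: bounds on the proximity to equitable
efficiency in terms of the componentwise maximum of per-object minimizers. -/
theorem proximity_bounds {ι : Type*} {n : ℕ} (hn : 0 < n)
    (C : Finset ι) (hC : C.Nonempty)
    (S : ι → Set (Fin n → ℝ))
    (hnng : ∀ t ∈ C, ∀ σ ∈ S t, 0 ≤ σ)
    (hne : ∀ t ∈ C, (S t).Nonempty)
    (hup : ∀ t ∈ C, ∀ σ ∈ S t, ∀ σ' : Fin n → ℝ, σ ≤ σ' → σ' ∈ S t)
    (σm : ι → Fin n → ℝ)
    (hmem : ∀ t ∈ C, σm t ∈ S t)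
    (hmin : ∀ t ∈ C, ∀ σ ∈ S t, e2norm (σm t) ≤ e2norm σ) :
    (1 / Real.sqrt n) * e2norm (fun i => C.sup' hC fun t => σm t i) ≤
        sInf {r : ℝ | ∃ σ : Fin n → ℝ, (∀ t ∈ C, σ ∈ S t) ∧ r = e2norm σ} ∧
      sInf {r : ℝ | ∃ σ : Fin n → ℝ, (∀ t ∈ C, σ ∈ S t) ∧ r = e2norm σ} ≤
        e2norm (fun i => C.sup' hC fun t => σm t i) :=
  proximity_bounds_general hn C hC S hup σm hmem hmin
end

section
/- Let R be a real m × n matrix with full column rank, and let σ̂ > 0, c > 0 be reals with c ≥ σ̂ · ‖R⁺‖ · √n, where R⁺ is the Moore–Penrose pseudoinverse and ‖·‖ the operator 2-norm. Then the set {σ̂ · uᵀ : u ∈ ℝ^n, ‖u‖_∞ ≤ 1} (row vectors of ∞-norm at most σ̂) is contained in the set {c · uᵀ R : u ∈ ℝ^m, ‖u‖₂ ≤ 1}. -/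
/-- The Moore–Penrose pseudoinverse of a full-column-rank real matrix. -/
noncomputable def pinv {m n : ℕ} (A : Matrix (Fin m) (Fin n) ℝ) :
    Matrix (Fin n) (Fin m) ℝ := (A.transpose * A)⁻¹ * A.transpose

/-- The operator 2-norm of a real matrix. -/
noncomputable def opNorm2 {m n : ℕ} (A : Matrix (Fin m) (Fin n) ℝ) : ℝ :=
  ‖LinearMap.toContinuousLinearMap (Matrix.toEuclideanLin A)‖

/-!
If `‖u‖_∞ ≤ 1` then `‖σ̂ u‖₂ ≤ σ̂ √n`. Since `R` has full column rank, `RᵀR` is invertible and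
`R⁺ R = 1`, so `w = (c⁻¹ wᵀ R⁺) (c R)`, and `‖c⁻¹ wᵀ R⁺‖₂ ≤ c⁻¹ ‖R⁺‖ σ̂ √n ≤ 1`.
-/

open Matrix
open scoped Matrix.Norms.L2Operator

lemma Matrix.isUnit_of_rank_eq_card {K ι : Type*} [Field K] [Fintype ι] [DecidableEq ι]
    {A : Matrix ι ι K} (hA : A.rank = Fintype.card ι) : IsUnit A := by
  rw [← mulVec_surjective_iff_isUnit, ← coe_mulVecLin, ← LinearMap.range_eq_top]
  exact Submodule.eq_top_of_finrank_eq (by rw [← rank, hA, Module.finrank_fintype_fun_eq_card])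

lemma pinv_mul_self {m n : ℕ} {A : Matrix (Fin m) (Fin n) ℝ} (hA : A.rank = n) :
    pinv A * A = 1 := by
  have hAtA : IsUnit (Aᵀ * A) :=
    isUnit_of_rank_eq_card (by rw [rank_transpose_mul_self, hA, Fintype.card_fin])
  rw [pinv, Matrix.mul_assoc, nonsing_inv_mul _ ((isUnit_iff_isUnit_det _).mp hAtA)]

lemma e2norm_eq_norm_toLp {n : ℕ} (x : Fin n → ℝ) : e2norm x = ‖WithLp.toLp 2 x‖ := by
  simp [e2norm, EuclideanSpace.norm_eq, sq_abs]

lemma e2norm_smul {n : ℕ} (a : ℝ) (x : Fin n → ℝ) : e2norm (a • x) = |a| * e2norm x := by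
  simp only [e2norm_eq_norm_toLp, WithLp.toLp_smul, norm_smul, Real.norm_eq_abs]

lemma e2norm_le_sqrt_of_abs_le_one {n : ℕ} {u : Fin n → ℝ} (hu : ∀ i, |u i| ≤ 1) :
    e2norm u ≤ √n :=
  calc √(∑ i, u i ^ 2) ≤ √(∑ _i : Fin n, 1) :=
        Real.sqrt_le_sqrt (Finset.sum_le_sum fun i _ => (sq_le_one_iff_abs_le_one _).2 (hu i))
    _ = √n := by simp

lemma e2norm_vecMul_le {m n : ℕ} (v : Fin m → ℝ) (A : Matrix (Fin m) (Fin n) ℝ) :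
    e2norm (vecMul v A) ≤ opNorm2 A * e2norm v := by
  have h := l2_opNorm_mulVec Aᴴ (WithLp.toLp 2 v)
  rwa [l2_opNorm_conjTranspose, conjTranspose_eq_transpose_of_trivial, WithLp.ofLp_toLp,
    mulVec_transpose, ← e2norm_eq_norm_toLp, ← e2norm_eq_norm_toLp] at h

/-- The box uncertainty set `{σ̂ u : ‖u‖_∞ ≤ 1}` is contained in the
ellipsoidal uncertainty set `{c uᵀ R : ‖u‖₂ ≤ 1}` whenever
`c ≥ σ̂ ‖R⁺‖ √n`. -/
theorem box_subset_ellipsoid {m n : ℕ}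
    (R : Matrix (Fin m) (Fin n) ℝ) (hrank : R.rank = n)
    (σhat c : ℝ) (hσ : 0 < σhat) (hc : 0 < c)
    (hscale : σhat * opNorm2 (pinv R) * Real.sqrt n ≤ c) :
    {w : Fin n → ℝ | ∃ u : Fin n → ℝ, (∀ i, |u i| ≤ 1) ∧ w = σhat • u} ⊆
      {w : Fin n → ℝ | ∃ u : Fin m → ℝ, e2norm u ≤ 1 ∧
        w = c • Matrix.vecMul u R} := by
  rintro _ ⟨u, hu, rfl⟩
  refine ⟨c⁻¹ • vecMul (σhat • u) (pinv R), ?_, ?_⟩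
  · have hw : e2norm (σhat • u) ≤ σhat * √n := by
      rw [e2norm_smul, abs_of_pos hσ]
      exact mul_le_mul_of_nonneg_left (e2norm_le_sqrt_of_abs_le_one hu) hσ.le
    have hR : 0 ≤ opNorm2 (pinv R) := norm_nonneg _
    rw [e2norm_smul, abs_of_pos (inv_pos.mpr hc), inv_mul_le_iff₀ hc, mul_one]
    calc e2norm (vecMul (σhat • u) (pinv R)) ≤ opNorm2 (pinv R) * (σhat * √n) :=
          (e2norm_vecMul_le _ _).trans (mul_le_mul_of_nonneg_left hw hR)
      _ ≤ c := by linarith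
  · rw [smul_vecMul, vecMul_vecMul, pinv_mul_self hrank, vecMul_one, smul_smul,
      mul_inv_cancel₀ hc.ne', one_smul]
end
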